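/- Let Γ = ⟨α, β⟩ with gcd(α,β)=1 and α even. Then the set of gaps g with W(g) = 0 is exactly {αβ − aα − (α/2)β : 1 ≤ a ≤ (β−1)/2}, and its cardinality is (β−1)/2. -/

import Mathlib

/-- The numerical semigroup generated by α and β. -/
def S (α β : ℕ) : Set ℕ := {n | ∃ x y : ℕ, n = x * α + y * β}

/-- The Γ-semimodule generated by [0, g], i.e. Γ ∪ (Γ + g). -/
def Smod (α β g : ℕ) : Set ℕ := S α β ∪ {n | ∃ s ∈ S α β, n = g + s}

/-- The semCond of a subset of ℕ: the least c such that all n ≥ c belong. -/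
noncomputable def semCond (Δ : Set ℕ) : ℕ := sInf {c | ∀ n, c ≤ n → n ∈ Δ}

/-- δ(Δ): the number of elements of Δ below the semCond. -/
noncomputable def semDelta (Δ : Set ℕ) : ℕ := Set.ncard {x ∈ Δ | x < semCond Δ}

/-- The Wilf number of a gap g of ⟨α,β⟩: W(g) = 2 δ(Δ) − c(Δ) for Δ = Γ ∪ (Γ+g). -/
noncomputable def W (α β g : ℕ) : ℤ :=
  2 * (semDelta (Smod α β g) : ℤ) - (semCond (Smod α β g) : ℤ)

-- n = v*β - u*α (positive) is not in S
lemma notS2 {α β : ℕ} (hα : 0 < α) (hβ : 0 < β) (hcop : Nat.Coprime α β)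
    {u v n : ℕ} (hu1 : 1 ≤ u) (hv2 : v ≤ α - 1)
    (hn : n + u * α = v * β) : n ∉ S α β := by
  rintro ⟨x, y, rfl⟩
  have h1 : (x + u) * α + y * β = v * β := by linear_combination hn
  have hy : y ≤ v := by
    by_contra h
    push_neg at h
    have : v * β < y * β := (Nat.mul_lt_mul_right hβ).mpr h
    omega
  have h2 : (x + u) * α = (v - y) * β := by
    zify [hy]
    have hz : ((x : ℤ) * α + y * β) + u * α = v * β := by exact_mod_cast hn
    linarith [hz]
  have hdvd : β ∣ (x + u) * α := Dvd.intro_left _ h2.symm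
  have hdvd2 : β ∣ x + u := (Nat.Coprime.dvd_of_dvd_mul_right hcop.symm hdvd)
  have hxu : β ≤ x + u := Nat.le_of_dvd (by omega) hdvd2
  have c1 : β * α ≤ (x + u) * α := Nat.mul_le_mul_right α hxu
  have c2 : (v - y) * β ≤ (α - 1) * β := Nat.mul_le_mul_right β (by omega)
  have c3 : (α - 1) * β < α * β := (Nat.mul_lt_mul_right hβ).mpr (by omega)
  rw [h2] at c1
  nlinarith [c1, c2, c3]

-- n = u*α - v*β (positive) is not in S
lemma notS1 {α β : ℕ} (hα : 0 < α) (hβ : 0 < β) (hcop : Nat.Coprime α β)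
    {u v n : ℕ} (hv1 : 1 ≤ v) (hu2 : u ≤ β - 1)
    (hn : n + v * β = u * α) : n ∉ S α β := by
  rintro ⟨x, y, rfl⟩
  have h1 : x * α + (y + v) * β = u * α := by linear_combination hn
  have hy : x ≤ u := by
    by_contra h
    push_neg at h
    have : u * α < x * α := (Nat.mul_lt_mul_right hα).mpr h
    omega
  have h2 : (y + v) * β = (u - x) * α := by
    zify [hy]
    have hz : ((x : ℤ) * α + y * β) + v * β = u * α := by exact_mod_cast hn
    linarith [hz]
  have hdvd : α ∣ (y + v) * β := Dvd.intro_left _ h2.symm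
  have hdvd2 : α ∣ y + v := (Nat.Coprime.dvd_of_dvd_mul_right hcop hdvd)
  have hyv : α ≤ y + v := Nat.le_of_dvd (by omega) hdvd2
  have c1 : α * β ≤ (y + v) * β := Nat.mul_le_mul_right β hyv
  have c2 : (u - x) * α ≤ (β - 1) * α := Nat.mul_le_mul_right α (by omega)
  have c3 : (β - 1) * α < β * α := (Nat.mul_lt_mul_right hα).mpr (by omega)
  rw [h2] at c1
  nlinarith [c1, c2, c3]

lemma exists_res {α β : ℕ} (hα : 0 < α) (hcop : Nat.Coprime α β) (n : ℕ) :
    ∃ y, y < α ∧ α ∣ (n + y * β) := by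
  haveI : NeZero α := ⟨hα.ne'⟩
  set u : (ZMod α)ˣ := ZMod.unitOfCoprime β hcop.symm with hu
  refine ⟨((-(n : ZMod α)) * ↑(u⁻¹)).val, ZMod.val_lt _, ?_⟩
  rw [← ZMod.natCast_eq_zero_iff]
  push_cast
  rw [ZMod.natCast_val, ZMod.cast_id]
  have hub : (↑u : ZMod α) = (β : ZMod α) := ZMod.coe_unitOfCoprime β hcop.symm
  calc (n : ZMod α) + (-(n : ZMod α)) * ↑(u⁻¹) * (β : ZMod α)
      = (n : ZMod α) + (-(n : ZMod α)) * (↑(u⁻¹) * ↑u) := by rw [hub]; ring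
    _ = 0 := by rw [← Units.val_mul, inv_mul_cancel]; simp

lemma gap_rep {α β : ℕ} (hα : 0 < α) (hαβ : α < β) (hcop : Nat.Coprime α β) {g : ℕ}
    (hg : g ∉ S α β) :
    ∃ a b : ℕ, 1 ≤ a ∧ a ≤ β - 1 ∧ 1 ≤ b ∧ b ≤ α - 1 ∧ g + a * α + b * β = α * β := by
  have hβ : 0 < β := by omega
  obtain ⟨b, hb, hdvd⟩ := exists_res hα hcop g
  have hb1 : 1 ≤ b := by
    rcases Nat.eq_zero_or_pos b with h0 | h0
    · exfalso
      subst h0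
      simp at hdvd
      obtain ⟨k, hk⟩ := hdvd
      exact hg ⟨k, 0, by rw [hk]; ring⟩
    · exact h0
  obtain ⟨t, ht⟩ := hdvd
  have ht1 : 1 ≤ t := by
    rcases Nat.eq_zero_or_pos t with h0 | h0
    · exfalso; subst h0; simp at ht; omega
    · exact h0
  have ht2 : t ≤ β - 1 := by
    by_contra hc
    push_neg at hc
    -- t ≥ β, so g + b*β ≥ α*β, g ≥ (α-b)*β, g ≡ (α-b)*β mod α
    have hge : α * β ≤ g + b * β := by
      calc α * β ≤ α * t := Nat.mul_le_mul_left α (by omega)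
        _ = g + b * β := ht.symm
    have hbig : (α - b) * β ≤ g := by
      have : (α - b) * β + b * β = α * β := by rw [← Nat.add_mul]; congr 1; omega
      omega
    have hd2 : α ∣ g - (α - b) * β := by
      have e1 : g - (α - b) * β = (g + b * β) - α * β := by
        have : (α - b) * β + b * β = α * β := by rw [← Nat.add_mul]; congr 1; omega
        omega
      rw [e1, ht]
      exact Nat.dvd_sub ⟨t, rfl⟩ ⟨β, rfl⟩
    obtain ⟨k, hk⟩ := hd2
    exact hg ⟨k, α - b, by have := Nat.mul_comm α k; omega⟩
  refine ⟨β - t, b, by omega, by omega, hb1, by omega, ?_⟩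
  have : (β - t) * α + t * α = β * α := by rw [← Nat.add_mul]; congr 1; omega
  have ht' : g + b * β = t * α := by rw [ht]; ring
  have : g + (β - t) * α + b * β = β * α := by omega
  linarith [this, Nat.mul_comm α β]

def n1 (α β a : ℕ) : ℤ := (α : ℤ) * β - (a + 1) * α - β
def n2 (α β b : ℕ) : ℤ := (α : ℤ) * β - α - (b + 1) * β

noncomputable def c0 (α β a b : ℕ) : ℕ :=
  if 0 < max (n1 α β a) (n2 α β b) then (max (n1 α β a) (n2 α β b)).toNat + 1 else 0

lemma no_zero {α β i j : ℕ} (hα : 0 < α) (hcop : Nat.Coprime α β)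
    (hi1 : 1 ≤ i) (hi2 : i ≤ β - 1) : i * α + j * β ≠ α * β := by
  intro h
  have hβ : 2 ≤ β := by omega
  have hdvd : β ∣ i * α := by
    have : i * α = (α - j) * β := by
      rcases le_or_gt j α with hj | hj
      · have e : (α - j) * β + j * β = α * β := by rw [← Nat.add_mul]; congr 1; omega
        omega
      · exfalso
        have : α * β < j * β := (Nat.mul_lt_mul_right (show 0 < β by omega)).mpr hj
        omega
    exact Dvd.intro_left _ this.symm
  have : β ∣ i := Nat.Coprime.dvd_of_dvd_mul_right hcop.symm hdvd
  have := Nat.le_of_dvd (by omega) this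
  omega

lemma gap_not_mem {α β a b g i j x : ℕ} (hα : 0 < α) (hαβ : α < β) (hcop : Nat.Coprime α β)
    (ha2 : a ≤ β - 1) (hb2 : b ≤ α - 1)
    (heq : g + a * α + b * β = α * β)
    (hi1 : 1 ≤ i) (hi2 : i ≤ β - 1) (hj1 : 1 ≤ j) (hj2 : j ≤ α - 1)
    (hx : x + i * α + j * β = α * β) (hij : a < i ∨ b < j) : x ∉ Smod α β g := by
  have hβ : 0 < β := by omega
  rintro (hS | ⟨s, hsS, hgs⟩)
  · have e : (α - j) * β + j * β = α * β := by rw [← Nat.add_mul]; congr 1; omega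
    exact notS2 hα hβ hcop hi1 (show α - j ≤ α - 1 by omega) (show x + i * α = (α - j) * β by omega) hS
  · have key : s + i * α + j * β = a * α + b * β := by omega
    rcases hij with h | h
    · by_cases hjb : j ≤ b
      · have e1 : (i - a) * α + a * α = i * α := by rw [← Nat.add_mul]; congr 1; omega
        have e2 : (b - j) * β + j * β = b * β := by rw [← Nat.add_mul]; congr 1; omega
        exact notS2 hα hβ hcop (show 1 ≤ i - a by omega) (show b - j ≤ α - 1 by omega)
          (show s + (i - a) * α = (b - j) * β by omega) hsS
      · push_neg at hjb
        have e1 : (a + 1) * α ≤ i * α := Nat.mul_le_mul_right _ (by omega)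
        have e2 : (b + 1) * β ≤ j * β := Nat.mul_le_mul_right _ (by omega)
        have e3 : (a + 1) * α = a * α + α := by rw [Nat.add_mul, one_mul]
        have e4 : (b + 1) * β = b * β + β := by rw [Nat.add_mul, one_mul]
        omega
    · by_cases hia : i ≤ a
      · have e1 : (a - i) * α + i * α = a * α := by rw [← Nat.add_mul]; congr 1; omega
        have e2 : (j - b) * β + b * β = j * β := by rw [← Nat.add_mul]; congr 1; omega
        exact notS1 hα hβ hcop (show 1 ≤ j - b by omega) (show a - i ≤ β - 1 by omega)
          (show s + (j - b) * β = (a - i) * α by omega) hsS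
      · push_neg at hia
        have e1 : (a + 1) * α ≤ i * α := Nat.mul_le_mul_right _ (by omega)
        have e2 : (b + 1) * β ≤ j * β := Nat.mul_le_mul_right _ (by omega)
        have e3 : (a + 1) * α = a * α + α := by rw [Nat.add_mul, one_mul]
        have e4 : (b + 1) * β = b * β + β := by rw [Nat.add_mul, one_mul]
        omega

lemma condAll {α β a b g : ℕ} (hα : 0 < α) (hαβ : α < β) (hcop : Nat.Coprime α β)
    (heq : g + a * α + b * β = α * β) :
    ∀ n, c0 α β a b ≤ n → n ∈ Smod α β g := by
  intro n hn
  by_contra hnot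
  have hnS : n ∉ S α β := fun h => hnot (Or.inl h)
  have hn1 : 1 ≤ n := by
    rcases Nat.eq_zero_or_pos n with h0 | h0
    · exact absurd (show n ∈ S α β from ⟨0, 0, by omega⟩) hnS
    · exact h0
  obtain ⟨i, j, hi1, hi2, hj1, hj2, hrep⟩ := gap_rep hα hαβ hcop hnS
  have hij : a < i ∨ b < j := by
    by_contra hc
    push_neg at hc
    obtain ⟨hia, hjb⟩ := hc
    apply hnot
    right
    refine ⟨(a - i) * α + (b - j) * β, ⟨a - i, b - j, rfl⟩, ?_⟩
    have e1 : (a - i) * α + i * α = a * α := by rw [← Nat.add_mul]; congr 1; omega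
    have e2 : (b - j) * β + j * β = b * β := by rw [← Nat.add_mul]; congr 1; omega
    omega
  have hrepz : (n : ℤ) + i * α + j * β = α * β := by exact_mod_cast hrep
  have hmax : (n : ℤ) ≤ max (n1 α β a) (n2 α β b) := by
    rcases hij with h | h
    · refine le_max_of_le_left ?_
      have h1 : ((a : ℤ) + 1) * α ≤ i * α := by
        have : ((a : ℤ) + 1) ≤ i := by exact_mod_cast h
        exact mul_le_mul_of_nonneg_right this (by positivity)
      have h2 : (β : ℤ) ≤ j * β := by
        have : (1 : ℤ) ≤ j := by exact_mod_cast hj1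
        nlinarith [show (0:ℤ) ≤ β by positivity]
      simp only [n1]
      linarith
    · refine le_max_of_le_right ?_
      have h1 : ((b : ℤ) + 1) * β ≤ j * β := by
        have : ((b : ℤ) + 1) ≤ j := by exact_mod_cast h
        exact mul_le_mul_of_nonneg_right this (by positivity)
      have h2 : (α : ℤ) ≤ i * α := by
        have : (1 : ℤ) ≤ i := by exact_mod_cast hi1
        nlinarith [show (0:ℤ) ≤ α by positivity]
      simp only [n2]
      linarith
  unfold c0 at hn
  split_ifs at hn with hpos
  · have : (max (n1 α β a) (n2 α β b)).toNat + 1 ≤ n := hn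
    have : ((max (n1 α β a) (n2 α β b)).toNat : ℤ) + 1 ≤ (n : ℤ) := by exact_mod_cast this
    rw [Int.toNat_of_nonneg (le_of_lt hpos)] at this
    omega
  · push_neg at hpos
    have : (n : ℤ) ≤ 0 := le_trans hmax hpos
    omega

lemma condNot {α β a b g : ℕ} (hα : 0 < α) (hαβ : α < β) (hcop : Nat.Coprime α β)
    (ha1 : 1 ≤ a) (ha2 : a ≤ β - 1) (hb1 : 1 ≤ b) (hb2 : b ≤ α - 1)
    (heq : g + a * α + b * β = α * β) :
    0 < c0 α β a b → (c0 α β a b - 1) ∉ Smod α β g := by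
  intro hc
  have hβ : 0 < β := by omega
  set m := max (n1 α β a) (n2 α β b) with hmdef
  have hm : 0 < m := by
    unfold c0 at hc
    split_ifs at hc with h
    · exact h
    · omega
  have hc1 : c0 α β a b - 1 = m.toNat := by
    unfold c0
    rw [← hmdef, if_pos hm]
    omega
  rw [hc1]
  set x := m.toNat with hxdef
  rcases le_or_gt (n2 α β b) (n1 α β a) with hcmp | hcmp
  · have hm1 : m = n1 α β a := max_eq_left hcmp
    have hxz : (x : ℤ) + ((a : ℤ) + 1) * α + β = α * β := by
      rw [hxdef, Int.toNat_of_nonneg hm.le, hm1]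
      unfold n1
      ring
    have hxe : x + (a + 1) * α + 1 * β = α * β := by
      have h1 : ((x + (a+1) * α + 1 * β : ℕ) : ℤ) = ((α * β : ℕ) : ℤ) := by
        push_cast
        linarith [hxz]
      exact_mod_cast h1
    have eA : (α - 1) * β + 1 * β = α * β := by rw [← Nat.add_mul]; congr 1; omega
    rintro (hS | ⟨s, hsS, hgs⟩)
    · exact notS2 hα hβ hcop (show 1 ≤ a + 1 by omega) (le_refl (α-1))
        (show x + (a + 1) * α = (α - 1) * β by omega) hS
    · have e3 : (a + 1) * α = a * α + α := by rw [Nat.add_mul, one_mul]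
      have key : s + α + 1 * β = b * β := by omega
      have hb2' : 2 ≤ b := by
        by_contra hbb
        push_neg at hbb
        have hb1' : b = 1 := by omega
        subst hb1'
        simp only [one_mul] at key
        omega
      have eB : (b - 1) * β + 1 * β = b * β := by rw [← Nat.add_mul]; congr 1; omega
      exact notS2 hα hβ hcop le_rfl (show b - 1 ≤ α - 1 by omega)
        (show s + 1 * α = (b - 1) * β by omega) hsS
  · have hm1 : m = n2 α β b := max_eq_right hcmp.le
    have hxz : (x : ℤ) + α + ((b : ℤ) + 1) * β = α * β := by
      rw [hxdef, Int.toNat_of_nonneg hm.le, hm1]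
      unfold n2
      ring
    have hxe : x + 1 * α + (b + 1) * β = α * β := by
      have h1 : ((x + 1 * α + (b + 1) * β : ℕ) : ℤ) = ((α * β : ℕ) : ℤ) := by
        push_cast
        linarith [hxz]
      exact_mod_cast h1
    have eA : (β - 1) * α + 1 * α = β * α := by rw [← Nat.add_mul]; congr 1; omega
    have ecomm : β * α = α * β := Nat.mul_comm β α
    rintro (hS | ⟨s, hsS, hgs⟩)
    · exact notS1 hα hβ hcop (show 1 ≤ b + 1 by omega) (show β - 1 ≤ β - 1 from le_rfl)
        (show x + (b + 1) * β = (β - 1) * α by omega) hS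
    · have e4 : (b + 1) * β = b * β + β := by rw [Nat.add_mul, one_mul]
      have key : s + 1 * α + β = a * α := by omega
      have ha2' : 2 ≤ a := by
        by_contra haa
        push_neg at haa
        have ha1' : a = 1 := by omega
        subst ha1'
        simp only [one_mul] at key
        omega
      have eB : (a - 1) * α + 1 * α = a * α := by rw [← Nat.add_mul]; congr 1; omega
      exact notS1 hα hβ hcop le_rfl (show a - 1 ≤ β - 1 by omega)
        (show s + 1 * β = (a - 1) * α by omega) hsS

lemma semCond_eq {α β a b g : ℕ} (hα : 0 < α) (hαβ : α < β) (hcop : Nat.Coprime α β)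
    (ha1 : 1 ≤ a) (ha2 : a ≤ β - 1) (hb1 : 1 ≤ b) (hb2 : b ≤ α - 1)
    (heq : g + a * α + b * β = α * β) :
    semCond (Smod α β g) = c0 α β a b := by
  unfold semCond
  apply le_antisymm
  · exact Nat.sInf_le (condAll hα hαβ hcop heq)
  · refine le_csInf ⟨c0 α β a b, ?_⟩ ?_
    · exact fun n hn => condAll hα hαβ hcop heq n hn
    intro x hx
    by_contra hlt
    push_neg at hlt
    exact condNot hα hαβ hcop ha1 ha2 hb1 hb2 heq (by omega)
      (hx (c0 α β a b - 1) (by omega))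

def boxF (α β : ℕ) : Finset (ℕ × ℕ) := Finset.Icc 1 (β - 1) ×ˢ Finset.Icc 1 (α - 1)
def Pset (α β : ℕ) : Finset (ℕ × ℕ) := (boxF α β).filter (fun p => p.1 * α + p.2 * β < α * β)
def Bset (α β a b : ℕ) : Finset (ℕ × ℕ) := (Pset α β).filter (fun p => a < p.1 ∨ b < p.2)
def Gset (α β a b : ℕ) : Finset ℕ := (Bset α β a b).image (fun p => α * β - (p.1 * α + p.2 * β))

lemma box_inj_aux {α β : ℕ} (hα : 0 < α) (hβ : 0 < β) (hcop : Nat.Coprime α β)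
    {i j i' j' : ℕ} (hii : i ≤ i') (hi2 : i' ≤ β - 1)
    (heq : i * α + j * β = i' * α + j' * β) : i = i' ∧ j = j' := by
  have h1 : i * α ≤ i' * α := Nat.mul_le_mul_right α hii
  have hjj : j' ≤ j := by
    by_contra hc
    push_neg at hc
    have : j * β < j' * β := (Nat.mul_lt_mul_right hβ).mpr hc
    omega
  have e1 : (i' - i) * α + i * α = i' * α := by rw [← Nat.add_mul]; congr 1; omega
  have e2 : (j - j') * β + j' * β = j * β := by rw [← Nat.add_mul]; congr 1; omega
  have h2 : (i' - i) * α = (j - j') * β := by omega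
  have hdvd : β ∣ (i' - i) * α := Dvd.intro_left _ h2.symm
  have hdvd2 : β ∣ i' - i := Nat.Coprime.dvd_of_dvd_mul_right hcop.symm hdvd
  rcases Nat.eq_zero_or_pos (i' - i) with hz | hz
  · have hi : i = i' := by omega
    subst hi
    exact ⟨rfl, Nat.eq_of_mul_eq_mul_right hβ (by omega)⟩
  · exfalso
    have := Nat.eq_zero_of_dvd_of_lt hdvd2 (by omega)
    omega

lemma box_inj {α β : ℕ} (hα : 0 < α) (hβ : 0 < β) (hcop : Nat.Coprime α β)
    {i j i' j' : ℕ} (hi2 : i ≤ β - 1) (hi2' : i' ≤ β - 1)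
    (heq : i * α + j * β = i' * α + j' * β) : i = i' ∧ j = j' := by
  rcases le_total i i' with h | h
  · exact box_inj_aux hα hβ hcop h hi2' heq
  · obtain ⟨h1, h2⟩ := box_inj_aux hα hβ hcop h hi2 heq.symm
    exact ⟨h1.symm, h2.symm⟩

lemma le_max_aux {α β a b i j x : ℕ} (hα : 0 < α) (hβ : 0 < β)
    (hi1 : 1 ≤ i) (hj1 : 1 ≤ j) (hij : a < i ∨ b < j)
    (hrep : x + i * α + j * β = α * β) : (x : ℤ) ≤ max (n1 α β a) (n2 α β b) := by
  have hrepz : (x : ℤ) + i * α + j * β = α * β := by exact_mod_cast hrep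
  rcases hij with h | h
  · refine le_max_of_le_left ?_
    have h1 : ((a : ℤ) + 1) * α ≤ i * α := by
      have : ((a : ℤ) + 1) ≤ i := by exact_mod_cast h
      exact mul_le_mul_of_nonneg_right this (by positivity)
    have h2 : (β : ℤ) ≤ j * β := by
      have : (1 : ℤ) ≤ j := by exact_mod_cast hj1
      nlinarith [show (0:ℤ) ≤ β by positivity]
    simp only [n1]
    linarith
  · refine le_max_of_le_right ?_
    have h1 : ((b : ℤ) + 1) * β ≤ j * β := by
      have : ((b : ℤ) + 1) ≤ j := by exact_mod_cast h
      exact mul_le_mul_of_nonneg_right this (by positivity)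
    have h2 : (α : ℤ) ≤ i * α := by
      have : (1 : ℤ) ≤ i := by exact_mod_cast hi1
      nlinarith [show (0:ℤ) ≤ α by positivity]
    simp only [n2]
    linarith

lemma Gmem_iff {α β a b g : ℕ} (hα : 0 < α) (hαβ : α < β) (hcop : Nat.Coprime α β)
    (ha2 : a ≤ β - 1) (hb2 : b ≤ α - 1)
    (heq : g + a * α + b * β = α * β) {x : ℕ} :
    x ∈ Gset α β a b ↔ x ∉ Smod α β g := by
  constructor
  · intro hx
    simp only [Gset, Finset.mem_image, Bset, Pset, boxF, Finset.mem_filter,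
      Finset.mem_product, Finset.mem_Icc] at hx
    obtain ⟨⟨i, j⟩, ⟨⟨⟨⟨hi1, hi2⟩, hj1, hj2⟩, hpos⟩, hij⟩, hval⟩ := hx
    dsimp only at hpos hij hval
    have hrep : x + i * α + j * β = α * β := by omega
    exact gap_not_mem hα hαβ hcop ha2 hb2 heq hi1 hi2 hj1 hj2 hrep hij
  · intro hx
    have hnS : x ∉ S α β := fun h => hx (Or.inl h)
    have hx1 : 1 ≤ x := by
      rcases Nat.eq_zero_or_pos x with h0 | h0
      · exact absurd (show x ∈ S α β from ⟨0, 0, by omega⟩) hnS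
      · exact h0
    obtain ⟨i, j, hi1, hi2, hj1, hj2, hrep⟩ := gap_rep hα hαβ hcop hnS
    have hij : a < i ∨ b < j := by
      by_contra hc
      push_neg at hc
      obtain ⟨hia, hjb⟩ := hc
      apply hx
      right
      refine ⟨(a - i) * α + (b - j) * β, ⟨a - i, b - j, rfl⟩, ?_⟩
      have e1 : (a - i) * α + i * α = a * α := by rw [← Nat.add_mul]; congr 1; omega
      have e2 : (b - j) * β + j * β = b * β := by rw [← Nat.add_mul]; congr 1; omega
      omega
    simp only [Gset, Finset.mem_image, Bset, Pset, boxF, Finset.mem_filter,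
      Finset.mem_product, Finset.mem_Icc]
    refine ⟨(i, j), ⟨⟨⟨⟨hi1, hi2⟩, ⟨hj1, hj2⟩⟩, ?_⟩, hij⟩, ?_⟩ <;> (dsimp only; omega)

lemma Glt {α β a b g : ℕ} (hα : 0 < α) (hαβ : α < β) (hcop : Nat.Coprime α β)
    (heq : g + a * α + b * β = α * β) {x : ℕ} (hx : x ∈ Gset α β a b) :
    x < c0 α β a b := by
  have hβ : 0 < β := by omega
  simp only [Gset, Finset.mem_image, Bset, Pset, boxF, Finset.mem_filter,
    Finset.mem_product, Finset.mem_Icc] at hx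
  obtain ⟨⟨i, j⟩, ⟨⟨⟨⟨hi1, hi2⟩, hj1, hj2⟩, hpos⟩, hij⟩, hval⟩ := hx
  dsimp only at hpos hij hval
  have hrep : x + i * α + j * β = α * β := by omega
  have hmax := le_max_aux hα hβ hi1 hj1 hij hrep
  have hx1 : 1 ≤ x := by
    rcases Nat.eq_zero_or_pos x with h0 | h0
    · exfalso
      have hnS := gap_not_mem hα hαβ hcop (by omega) (by omega) heq hi1 hi2 hj1 hj2 hrep hij
      exact hnS (Or.inl ⟨0, 0, by omega⟩)
    · exact h0
  have hmpos : 0 < max (n1 α β a) (n2 α β b) := by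
    have : (1 : ℤ) ≤ (x : ℤ) := by exact_mod_cast hx1
    omega
  unfold c0
  rw [if_pos hmpos]
  omega

lemma gpos {α β a b g : ℕ} (hα : 0 < α) (hαβ : α < β) (hcop : Nat.Coprime α β)
    (ha1 : 1 ≤ a) (ha2 : a ≤ β - 1)
    (heq : g + a * α + b * β = α * β) : 1 ≤ g := by
  rcases Nat.eq_zero_or_pos g with h0 | h0
  · exfalso
    exact no_zero hα hcop ha1 ha2 (show a * α + b * β = α * β by omega)
  · exact h0

lemma cardG {α β a b : ℕ} (hα : 0 < α) (hαβ : α < β) (hcop : Nat.Coprime α β) :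
    (Gset α β a b).card = (Bset α β a b).card := by
  have hβ : 0 < β := by omega
  apply Finset.card_image_of_injOn
  intro p hp q hq hval
  simp only [Finset.coe_filter, Bset, Pset, boxF, Finset.mem_filter, Finset.mem_product,
    Finset.mem_Icc, Set.mem_setOf_eq] at hp hq
  obtain ⟨⟨⟨⟨hp1, hp2⟩, hp3, hp4⟩, hppos⟩, hpij⟩ := hp
  obtain ⟨⟨⟨⟨hq1, hq2⟩, hq3, hq4⟩, hqpos⟩, hqij⟩ := hq
  dsimp only at hval
  have hsum : p.1 * α + p.2 * β = q.1 * α + q.2 * β := by omega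
  obtain ⟨h1, h2⟩ := box_inj hα hβ hcop hp2 hq2 hsum
  exact Prod.ext h1 h2

lemma cardB {α β a b g : ℕ} (hα : 0 < α) (hαβ : α < β) (hcop : Nat.Coprime α β)
    (ha1 : 1 ≤ a) (ha2 : a ≤ β - 1) (hb1 : 1 ≤ b) (hb2 : b ≤ α - 1)
    (heq : g + a * α + b * β = α * β) :
    (Bset α β a b).card + a * b = (Pset α β).card := by
  classical
  have hg1 : 1 ≤ g := gpos hα hαβ hcop ha1 ha2 heq
  have hfilter : (Pset α β).filter (fun p => ¬(a < p.1 ∨ b < p.2)) =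
      Finset.Icc 1 a ×ˢ Finset.Icc 1 b := by
    ext ⟨i, j⟩
    simp only [Pset, boxF, Finset.mem_filter, Finset.mem_product, Finset.mem_Icc, not_or, not_lt]
    constructor
    · rintro ⟨⟨⟨⟨hi1, hi2⟩, hj1, hj2⟩, hpos⟩, hia, hjb⟩
      exact ⟨⟨hi1, hia⟩, hj1, hjb⟩
    · rintro ⟨⟨hi1, hia⟩, hj1, hjb⟩
      have m1 : i * α ≤ a * α := Nat.mul_le_mul_right α hia
      have m2 : j * β ≤ b * β := Nat.mul_le_mul_right β hjb
      exact ⟨⟨⟨⟨hi1, by omega⟩, hj1, by omega⟩, by omega⟩, hia, hjb⟩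
  have hkey := Finset.card_filter_add_card_filter_not
    (s := Pset α β) (fun p => a < p.1 ∨ b < p.2)
  rw [hfilter] at hkey
  have hprod : (Finset.Icc 1 a ×ˢ Finset.Icc 1 b).card = a * b := by
    rw [Finset.card_product, Nat.card_Icc, Nat.card_Icc]
    simp
  rw [hprod] at hkey
  exact hkey

lemma cardP {α β : ℕ} (hα : 0 < α) (hαβ : α < β) (hcop : Nat.Coprime α β) :
    2 * (Pset α β).card = (α - 1) * (β - 1) := by
  classical
  have hβ : 0 < β := by omega
  set Q := (boxF α β).filter (fun p => ¬(p.1 * α + p.2 * β < α * β)) with hQ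
  have ecomm : β * α = α * β := Nat.mul_comm β α
  have hPQ : (Pset α β).card = Q.card := by
    apply Finset.card_nbij' (i := fun p => (β - p.1, α - p.2)) (j := fun p => (β - p.1, α - p.2))
    · intro p hp
      simp only [Finset.mem_coe, Pset, boxF, Finset.mem_filter, Finset.mem_product, Finset.mem_Icc] at hp
      obtain ⟨⟨⟨hi1, hi2⟩, hj1, hj2⟩, hpos⟩ := hp
      have e1 : (β - p.1) * α + p.1 * α = β * α := by rw [← Nat.add_mul]; congr 1; omega
      have e2 : (α - p.2) * β + p.2 * β = α * β := by rw [← Nat.add_mul]; congr 1; omega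
      simp only [Finset.mem_coe, hQ, boxF, Finset.mem_filter, Finset.mem_product, Finset.mem_Icc, not_lt]
      exact ⟨⟨⟨by omega, by omega⟩, by omega, by omega⟩, by omega⟩
    · intro q hq
      simp only [Finset.mem_coe, hQ, boxF, Finset.mem_filter, Finset.mem_product, Finset.mem_Icc, not_lt] at hq
      obtain ⟨⟨⟨hi1, hi2⟩, hj1, hj2⟩, hge⟩ := hq
      have hne : q.1 * α + q.2 * β ≠ α * β := no_zero hα hcop hi1 hi2
      have e1 : (β - q.1) * α + q.1 * α = β * α := by rw [← Nat.add_mul]; congr 1; omega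
      have e2 : (α - q.2) * β + q.2 * β = α * β := by rw [← Nat.add_mul]; congr 1; omega
      simp only [Finset.mem_coe, Pset, boxF, Finset.mem_filter, Finset.mem_product, Finset.mem_Icc]
      exact ⟨⟨⟨by omega, by omega⟩, by omega, by omega⟩, by omega⟩
    · intro p hp
      simp only [Finset.mem_coe, Pset, boxF, Finset.mem_filter, Finset.mem_product, Finset.mem_Icc] at hp
      obtain ⟨⟨⟨hi1, hi2⟩, hj1, hj2⟩, hpos⟩ := hp
      apply Prod.ext <;> dsimp only <;> omega
    · intro q hq
      simp only [Finset.mem_coe, hQ, boxF, Finset.mem_filter, Finset.mem_product, Finset.mem_Icc, not_lt] at hq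
      obtain ⟨⟨⟨hi1, hi2⟩, hj1, hj2⟩, hge⟩ := hq
      apply Prod.ext <;> dsimp only <;> omega
  have hkey := Finset.card_filter_add_card_filter_not
    (s := boxF α β) (fun p => p.1 * α + p.2 * β < α * β)
  have hbox : (boxF α β).card = (β - 1) * (α - 1) := by
    rw [boxF, Finset.card_product, Nat.card_Icc, Nat.card_Icc]
    simp
  have hsum : (Pset α β).card + Q.card = (β - 1) * (α - 1) := by
    rw [← hbox]
    exact hkey
  have hcomm2 : (β - 1) * (α - 1) = (α - 1) * (β - 1) := Nat.mul_comm _ _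
  omega

lemma W_eq {α β a b g : ℕ} (hα : 0 < α) (hαβ : α < β) (hcop : Nat.Coprime α β)
    (ha1 : 1 ≤ a) (ha2 : a ≤ β - 1) (hb1 : 1 ≤ b) (hb2 : b ≤ α - 1)
    (heq : g + a * α + b * β = α * β) :
    ∃ k : ℕ, 2 * k + 2 * (a * b) = (α - 1) * (β - 1) ∧ k ≤ c0 α β a b ∧
      W α β g = (c0 α β a b : ℤ) - 2 * k := by
  classical
  have hβ : 0 < β := by omega
  have hsub : Gset α β a b ⊆ Finset.range (c0 α β a b) :=
    fun x hx => Finset.mem_range.mpr (Glt hα hαβ hcop heq hx)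
  have hcard : (Gset α β a b).card ≤ c0 α β a b := by
    have := Finset.card_le_card hsub
    rwa [Finset.card_range] at this
  have hdelta : semDelta (Smod α β g) = c0 α β a b - (Gset α β a b).card := by
    unfold semDelta
    rw [semCond_eq hα hαβ hcop ha1 ha2 hb1 hb2 heq]
    have hset : {x ∈ Smod α β g | x < c0 α β a b} =
        ↑(Finset.range (c0 α β a b) \ Gset α β a b) := by
      ext x
      simp only [Set.mem_setOf_eq, Finset.coe_sdiff, Set.mem_diff, Finset.coe_range,
        Set.mem_Iio, Finset.mem_coe]
      constructor
      · rintro ⟨hxm, hxlt⟩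
        exact ⟨hxlt, fun hG => (Gmem_iff hα hαβ hcop ha2 hb2 heq).mp hG hxm⟩
      · rintro ⟨hxlt, hxG⟩
        refine ⟨?_, hxlt⟩
        by_contra hxm
        exact hxG ((Gmem_iff hα hαβ hcop ha2 hb2 heq).mpr hxm)
    rw [hset, Set.ncard_coe_finset, Finset.card_sdiff_of_subset hsub, Finset.card_range]
  have hG2 : 2 * (Gset α β a b).card + 2 * (a * b) = (α - 1) * (β - 1) := by
    have h1 := cardG (a := a) (b := b) hα hαβ hcop
    have h2 := cardB hα hαβ hcop ha1 ha2 hb1 hb2 heq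
    have h3 := cardP (β := β) hα hαβ hcop
    omega
  refine ⟨_, hG2, hcard, ?_⟩
  unfold W
  rw [hdelta, semCond_eq hα hαβ hcop ha1 ha2 hb1 hb2 heq, Nat.cast_sub hcard]
  ring

lemma beta_odd {α β : ℕ} (hcop : Nat.Coprime α β) (hαeven : Even α) : β % 2 = 1 := by
  rcases Nat.even_or_odd β with h | h
  · exfalso
    obtain ⟨c, hc⟩ := hαeven
    obtain ⟨d, hd⟩ := h
    have h2 : 2 ∣ Nat.gcd α β := Nat.dvd_gcd ⟨c, by omega⟩ ⟨d, by omega⟩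
    rw [hcop] at h2
    omega
  · obtain ⟨d, hd⟩ := h
    omega

set_option maxHeartbeats 2000000 in
theorem stmt11 (α β : ℕ) (hα : 0 < α) (hαβ : α < β) (hcop : Nat.Coprime α β)
    (hαeven : Even α) :
    {g : ℕ | g ∉ S α β ∧ W α β g = 0} =
      {g : ℕ | ∃ a : ℕ, 1 ≤ a ∧ a ≤ (β - 1) / 2 ∧ g + a * α + (α / 2) * β = α * β} ∧
    Set.ncard {g : ℕ | g ∉ S α β ∧ W α β g = 0} = (β - 1) / 2 := by
  have hβ : 0 < β := by omega
  have hβodd : β % 2 = 1 := beta_odd hcop hαeven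
  have hα2 : 2 ≤ α := by
    obtain ⟨c, hc⟩ := hαeven
    omega
  have hhalf : 2 * (α / 2) = α := by
    obtain ⟨c, hc⟩ := hαeven
    omega
  have hEq : {g : ℕ | g ∉ S α β ∧ W α β g = 0} =
      {g : ℕ | ∃ a : ℕ, 1 ≤ a ∧ a ≤ (β - 1) / 2 ∧ g + a * α + (α / 2) * β = α * β} := by
    ext g
    simp only [Set.mem_setOf_eq]
    constructor
    · rintro ⟨hgS, hW⟩
      obtain ⟨a, b, ha1, ha2, hb1, hb2, heq⟩ := gap_rep hα hαβ hcop hgS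
      have hg1 : 1 ≤ g := gpos hα hαβ hcop ha1 ha2 heq
      obtain ⟨k, hk1, hk2, hk3⟩ := W_eq hα hαβ hcop ha1 ha2 hb1 hb2 heq
      have hk1z : 2 * (k : ℤ) + 2 * ((a : ℤ) * b) = ((α : ℤ) - 1) * ((β : ℤ) - 1) := by
        have : ((2 * k + 2 * (a * b) : ℕ) : ℤ) = (((α - 1) * (β - 1) : ℕ) : ℤ) := by
          exact_mod_cast hk1
        push_cast [Nat.cast_sub (by omega : 1 ≤ α), Nat.cast_sub (by omega : 1 ≤ β)] at this
        linarith
      have heqz : (g : ℤ) + a * α + b * β = α * β := by exact_mod_cast heq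
      rcases lt_or_ge 0 (max (n1 α β a) (n2 α β b)) with hpos | hneg
      · have hc0 : (c0 α β a b : ℤ) = max (n1 α β a) (n2 α β b) + 1 := by
          unfold c0
          rw [if_pos hpos]
          push_cast [Int.toNat_of_nonneg hpos.le]
          ring
        have hc0k : (c0 α β a b : ℤ) = 2 * k := by
          rw [hW] at hk3
          linarith
        rcases le_or_gt (n2 α β b) (n1 α β a) with hcmp | hcmp
        · -- max = n1, derive 2b = α
          rw [max_eq_left hcmp] at hc0 hpos
          have hn1 : (n1 α β a) = (α : ℤ) * β - ((a : ℤ) + 1) * α - β := rfl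
          have key : (a : ℤ) * (2 * (b : ℤ) - α) = 0 := by
            have key0 : 2 * ((a : ℤ) * b) - (a : ℤ) * α = 0 := by
              linarith [hc0k, hc0, hn1, hk1z]
            linear_combination key0
          have hab : 2 * b = α := by
            rcases mul_eq_zero.mp key with h | h
            · exfalso
              have h0 : (a : ℤ) = 0 := h
              have : a = 0 := by exact_mod_cast h0
              omega
            · have : 2 * (b : ℤ) = α := by linarith
              exact_mod_cast this
          have hb' : α / 2 = b := by omega
          have ha' : a ≤ (β - 1) / 2 := by
            -- from g ≥ 1 : a*α + b*β ≤ α*β - 1, 2b = α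
            have h2 : 2 * ((a : ℤ) * α) < (β : ℤ) * α := by
              have hbz : 2 * (b : ℤ) = α := by exact_mod_cast hab
              have hbb : 2 * ((b : ℤ) * β) = (α : ℤ) * β := by
                linear_combination (β : ℤ) * hbz
              linarith [heqz, hbb, (by exact_mod_cast hg1 : (1 : ℤ) ≤ g)]
            have h3 : 2 * (a : ℤ) < β := by
              have hαz : (0 : ℤ) < α := by exact_mod_cast hα
              nlinarith
            have : 2 * a < β := by exact_mod_cast h3
            omega
          exact ⟨a, ha1, ha', by rw [hb']; exact heq⟩
        · -- max = n2, derive 2a = β, contradiction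
          exfalso
          rw [max_eq_right hcmp.le] at hc0 hpos
          have hn2 : (n2 α β b) = (α : ℤ) * β - α - ((b : ℤ) + 1) * β := rfl
          have key : (b : ℤ) * (2 * (a : ℤ) - β) = 0 := by
            have key0 : 2 * ((a : ℤ) * b) - (b : ℤ) * β = 0 := by
              linarith [hc0k, hc0, hn2, hk1z]
            linear_combination key0
          rcases mul_eq_zero.mp key with h | h
          · have : (b : ℤ) = 0 := h
            have : b = 0 := by exact_mod_cast this
            omega
          · have : 2 * (a : ℤ) = β := by linarith
            have : 2 * a = β := by exact_mod_cast this
            omega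
      · -- c0 = 0 : only possible when α = 2
        have hc0 : c0 α β a b = 0 := by
          unfold c0
          rw [if_neg (by omega)]
        have hk0 : k = 0 := by omega
        have h2ab : 2 * (a * b) = (α - 1) * (β - 1) := by omega
        have hn1le : (n1 α β a) ≤ 0 := le_trans (le_max_left _ _) hneg
        have hn1z : (α : ℤ) * β - ((a : ℤ) + 1) * α - β ≤ 0 := hn1le
        -- derive b = 1
        have hb1' : b = 1 := by
          by_contra hbneq
          have hb2' : 2 ≤ b := by omega
          have hbb : 2 * β ≤ b * β := Nat.mul_le_mul_right β hb2'
          have hbz : 2 * (β : ℤ) ≤ (b : ℤ) * β := by exact_mod_cast hbb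
          have hαβz : (α : ℤ) < β := by exact_mod_cast hαβ
          linarith [heqz, hn1z, (by exact_mod_cast hg1 : (1 : ℤ) ≤ g)]
        subst hb1'
        -- 2a = (α-1)*(β-1), a ≤ β-1 forces α = 2
        have hα2' : α = 2 := by
          by_contra hαneq
          have h4 : 4 ≤ α := by
            obtain ⟨c, hc⟩ := hαeven
            omega
          have h3 : 3 * (β - 1) ≤ (α - 1) * (β - 1) := Nat.mul_le_mul_right _ (by omega)
          omega
        subst hα2'
        refine ⟨a, ha1, by omega, by simpa using heq⟩
    · rintro ⟨a, ha1, ha2', heqa⟩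
      set b := α / 2 with hbdef
      have hab : 2 * b = α := hhalf
      have hb1 : 1 ≤ b := by omega
      have hb2 : b ≤ α - 1 := by omega
      have ha2 : a ≤ β - 1 := by omega
      have heq : g + a * α + b * β = α * β := heqa
      have hgS : g ∉ S α β := by
        have e : (α - b) * β + b * β = α * β := by rw [← Nat.add_mul]; congr 1; omega
        exact notS2 hα hβ hcop ha1 (by omega) (show g + a * α = (α - b) * β by omega)
      refine ⟨hgS, ?_⟩
      obtain ⟨k, hk1, hk2, hk3⟩ := W_eq hα hαβ hcop ha1 ha2 hb1 hb2 heq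
      have hk1z : 2 * (k : ℤ) + 2 * ((a : ℤ) * b) = ((α : ℤ) - 1) * ((β : ℤ) - 1) := by
        have : ((2 * k + 2 * (a * b) : ℕ) : ℤ) = (((α - 1) * (β - 1) : ℕ) : ℤ) := by
          exact_mod_cast hk1
        push_cast [Nat.cast_sub (by omega : 1 ≤ α), Nat.cast_sub (by omega : 1 ≤ β)] at this
        linarith
      have hbz : 2 * (b : ℤ) = α := by exact_mod_cast hab
      -- n2 < n1
      have hcmp : n2 α β b ≤ n1 α β a := by
        have hn1 : (n1 α β a) = (α : ℤ) * β - ((a : ℤ) + 1) * α - β := rfl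
        have hn2 : (n2 α β b) = (α : ℤ) * β - α - ((b : ℤ) + 1) * β := rfl
        -- need a*α ≤ b*β : 2aα ≤ (β-1)α < βα = 2bβ
        have h2a : 2 * a ≤ β - 1 := by omega
        have h2az : 2 * (a : ℤ) ≤ (β : ℤ) - 1 := by
          have := (by exact_mod_cast h2a : 2 * (a : ℤ) ≤ ((β - 1 : ℕ) : ℤ))
          rw [Nat.cast_sub (by omega : 1 ≤ β)] at this
          push_cast at this
          linarith
        have hαz : (0 : ℤ) < α := by exact_mod_cast hα
        have hβz : (0 : ℤ) < β := by exact_mod_cast hβ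
        rw [hn1, hn2]
        nlinarith
      rcases lt_or_ge 0 (n1 α β a) with hpos | hneg
      · have hposm : 0 < max (n1 α β a) (n2 α β b) := by
          rw [max_eq_left hcmp]
          exact hpos
        have hc0 : (c0 α β a b : ℤ) = n1 α β a + 1 := by
          unfold c0
          rw [if_pos hposm, max_eq_left hcmp]
          push_cast [Int.toNat_of_nonneg hpos.le]
          ring
        have hn1 : (n1 α β a) = (α : ℤ) * β - ((a : ℤ) + 1) * α - β := rfl
        have habz : 2 * ((a : ℤ) * b) = (a : ℤ) * α := by
          linear_combination (a : ℤ) * hbz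
        rw [hk3, hc0, hn1]
        linarith [hk1z, habz]
      · have hc0 : c0 α β a b = 0 := by
          unfold c0
          rw [if_neg]
          rw [max_eq_left hcmp]
          omega
        have hk0 : k = 0 := by omega
        rw [hk3, hc0, hk0]
        simp
  refine ⟨hEq, ?_⟩
  rw [hEq]
  classical
  have himg : {g : ℕ | ∃ a : ℕ, 1 ≤ a ∧ a ≤ (β - 1) / 2 ∧ g + a * α + (α / 2) * β = α * β} =
      ↑((Finset.Icc 1 ((β - 1) / 2)).image (fun a => α * β - (a * α + (α / 2) * β))) := by
    ext g
    simp only [Set.mem_setOf_eq, Finset.coe_image, Set.mem_image, Finset.mem_coe,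
      Finset.mem_Icc]
    constructor
    · rintro ⟨a, ha1, ha2, heqa⟩
      exact ⟨a, ⟨ha1, ha2⟩, by omega⟩
    · rintro ⟨a, ⟨ha1, ha2⟩, heqa⟩
      refine ⟨a, ha1, ha2, ?_⟩
      -- need a*α + (α/2)*β ≤ α*β
      have h1 : 2 * (a * α) ≤ (β - 1) * α := by
        have : 2 * a ≤ β - 1 := by omega
        calc 2 * (a * α) = (2 * a) * α := by ring
          _ ≤ (β - 1) * α := Nat.mul_le_mul_right α this
      have h2 : 2 * ((α / 2) * β) = α * β := by
        calc 2 * ((α / 2) * β) = (2 * (α / 2)) * β := by ring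
          _ = α * β := by rw [hhalf]
      have h3 : (β - 1) * α < β * α := (Nat.mul_lt_mul_right hα).mpr (by omega)
      have h4 : β * α = α * β := Nat.mul_comm β α
      omega
  rw [himg, Set.ncard_coe_finset]
  rw [Finset.card_image_of_injOn, Nat.card_Icc]
  · omega
  · intro x hx y hy hval
    simp only [Finset.coe_Icc, Set.mem_Icc] at hx hy
    dsimp only at hval
    have h1 : 2 * (x * α) ≤ (β - 1) * α := by
      have : 2 * x ≤ β - 1 := by omega
      calc 2 * (x * α) = (2 * x) * α := by ring
        _ ≤ (β - 1) * α := Nat.mul_le_mul_right α this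
    have h1' : 2 * (y * α) ≤ (β - 1) * α := by
      have : 2 * y ≤ β - 1 := by omega
      calc 2 * (y * α) = (2 * y) * α := by ring
        _ ≤ (β - 1) * α := Nat.mul_le_mul_right α this
    have h2 : 2 * ((α / 2) * β) = α * β := by
      calc 2 * ((α / 2) * β) = (2 * (α / 2)) * β := by ring
        _ = α * β := by rw [hhalf]
    have h3 : (β - 1) * α < β * α := (Nat.mul_lt_mul_right hα).mpr (by omega)
    have h4 : β * α = α * β := Nat.mul_comm β α
    have hsum : x * α = y * α := by omega
    exact Nat.eq_of_mul_eq_mul_right hα hsum
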